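/- arXiv:math/0412264 — 2 statements merged into one kernel-verified Lean document; each statement's English description precedes it below -/
import Mathlib

section
/- The graded Euler characteristic of the graph cohomology complex C(G) equals the chromatic polynomial of G evaluated at λ = 1+q: Σ_i (-1)^i qdim(C^i(G)) = P_G(1+q). -/
/-- A finite multigraph (possibly with loops and multiple edges), with
vertex type `V` and edges indexed by `Fin n`, edge `e` having endpoints `ends e`. -/
structure OGraph where
  V : Type
  [finV : Fintype V]
  n : ℕ
  ends : Fin n → Sym2 V

attribute [instance] OGraph.finV

namespace OGraph

variable (G : OGraph)

/-- Two vertices are related if some edge in `s` joins them. -/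
def rel (s : Finset (Fin G.n)) (u v : G.V) : Prop := ∃ e ∈ s, G.ends e = s(u, v)

/-- The set of connected components of the spanning subgraph `[G:s]`. -/
def Comp (s : Finset (Fin G.n)) : Type := Quot (G.rel s)

/-- `k(s)`: the number of connected components of the spanning subgraph `[G:s]`. -/
noncomputable def ncomp (s : Finset (Fin G.n)) : ℕ := Nat.card (G.Comp s)

/-- The number of proper colorings of `G` with `m` colors: the value `P_G(m)` of
the chromatic polynomial at the natural number `m`. -/
noncomputable def chromatic (m : ℕ) : ℕ :=
  Nat.card {c : G.V → Fin m // ∀ e u v, G.ends e = s(u, v) → c u ≠ c v}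

end OGraph

namespace OGraph

/-- The map on quotients induced by an implication of relations. -/
def qmap {V : Type} {r r' : V → V → Prop} (h : ∀ u v, r u v → r' u v) :
    Quot r → Quot r' :=
  Quot.lift (Quot.mk r') fun u v huv => Quot.sound (h u v huv)

variable (G : OGraph)

/-- An enhanced state: a subset `s` of the edges together with an assignment of a
color (`1` or `x`; a component is "colored `x`" when the predicate holds) to each
connected component of the spanning subgraph `[G:s]`. -/
abbrev EState := Σ s : Finset (Fin G.n), (G.Comp s → Prop)

/-- `j(S)`: the number of components colored `x` in the enhanced state `S`. -/
noncomputable def jdeg (S : G.EState) : ℕ := Nat.card {k : G.Comp S.1 // S.2 k}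

open Classical in
/-- The enhanced state(s) obtained from `S` by adding the edge `e`: zero if `e`
already belongs to `S` or if the added edge merges two components both colored `x`
(the product `x∗x = 0`); otherwise the enhanced state on `insert e s` whose
coloring is obtained from that of `S` using the product
`1∗1 = 1`, `1∗x = x∗1 = x`. -/
noncomputable def addEdge (S : G.EState) (e : Fin G.n) : G.EState →₀ ℤ :=
  if e ∈ S.1 then 0
  else
    let p : G.Comp S.1 → G.Comp (insert e S.1) :=
      qmap fun _ _ huv => huv.elim fun f hf => ⟨f, Finset.mem_insert_of_mem hf.1, hf.2⟩
    if ∃ k1 k2 : G.Comp S.1, k1 ≠ k2 ∧ p k1 = p k2 ∧ S.2 k1 ∧ S.2 k2 then 0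
    else Finsupp.single ⟨insert e S.1, fun K => ∃ k, p k = K ∧ S.2 k⟩ 1

/-- The differential applied to a single enhanced state: the signed sum, over all
edges `e` not in `S`, of the states obtained by adding `e`; the sign is `(-1)^{n(e)}`
where `n(e)` is the number of edges of `S` ordered before `e`. -/
noncomputable def dState (S : G.EState) : G.EState →₀ ℤ :=
  ∑ e : Fin G.n, ((-1 : ℤ) ^ (S.1.filter fun f => f < e).card) • G.addEdge S e

/-- The differential of the graph cohomology complex, as a linear endomorphism of
the free `ℤ`-module generated by all enhanced states. -/
noncomputable def diff : (G.EState →₀ ℤ) →ₗ[ℤ] (G.EState →₀ ℤ) :=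
  Finsupp.lsum ℤ fun S => LinearMap.toSpanSingleton ℤ _ (G.dState S)

/-- The chain group `C^{i,j}(G)`: the free `ℤ`-module spanned by the enhanced
states with `i` edges and `j` components colored `x`, as a submodule of the free
module on all enhanced states. -/
noncomputable def Cmod (i j : ℕ) : Submodule ℤ (G.EState →₀ ℤ) :=
  Finsupp.supported ℤ ℤ {S : G.EState | S.1.card = i ∧ G.jdeg S = j}

/-- The cocycles of bidegree `(i,j)`. -/
noncomputable def Zmod (i j : ℕ) : Submodule ℤ (G.EState →₀ ℤ) :=
  LinearMap.ker G.diff ⊓ G.Cmod i j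

/-- The coboundaries: `0` for `i = 0`, the image of `C^{i,j}` for `i + 1`. -/
noncomputable def Bmod : ℕ → ℕ → Submodule ℤ (G.EState →₀ ℤ)
  | 0, _ => ⊥
  | i + 1, j => Submodule.map G.diff (G.Cmod i j)

/-- The graph cohomology group `H^{i,j}(G)` (cocycles modulo coboundaries in
bidegree `(i,j)`). -/
noncomputable def Hmod (i j : ℕ) : Type :=
  (G.Zmod i j).toAddSubgroup ⧸
    (AddSubgroup.comap (G.Zmod i j).toAddSubgroup.subtype (G.Bmod i j).toAddSubgroup)

noncomputable instance (i j : ℕ) : AddCommGroup (G.Hmod i j) := by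
  delta Hmod; infer_instance

end OGraph

namespace OGraph

/-- The graded dimension of the chain group `C^i(G) = ⊕_j C^{i,j}(G)`. -/
noncomputable def qdimC (G : OGraph) (i : ℕ) : PowerSeries ℤ :=
  PowerSeries.mk fun j => (Module.finrank ℤ (G.Cmod i j) : ℤ)

end OGraph

/-!
Inclusion–exclusion over the events "edge `e` is monochromatic" gives Whitney's formula
`P_G(λ) = Σ_s (-1)^{|s|} λ^{k(s)}`, since the colorings monochromatic on every edge of `s` are
the colorings of the `k(s)` components of `[G:s]`. On the other side, an enhanced state on `s`
with `j` components colored `x` is a choice of `j` of those `k(s)` components, so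
`qdim C^i(G) = Σ_{|s| = i} (1+q)^{k(s)}`. Grouping Whitney's sum by `|s|` at `λ = 1 + q` gives
the Euler characteristic.
-/

open Finset

def Quot.funEquiv {V α : Type*} (r : V → V → Prop) :
    (Quot r → α) ≃ {f : V → α // ∀ u v, r u v → f u = f v} where
  toFun g := ⟨g ∘ Quot.mk r, fun _ _ h => congrArg g (Quot.sound h)⟩
  invFun f := Quot.lift f.1 f.2
  left_inv g := funext fun q => Quot.inductionOn q fun _ => rfl

theorem Quot.card_fun_compatible {V α : Type*} (r : V → V → Prop) [Finite (Quot r)] :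
    Nat.card {f : V → α // ∀ u v, r u v → f u = f v} = Nat.card α ^ Nat.card (Quot r) := by
  rw [← Nat.card_congr (Quot.funEquiv r), Nat.card_fun]

theorem Nat.card_pred_with_card {α : Type*} [Finite α] (j : ℕ) :
    Nat.card {P : α → Prop // Nat.card {a // P a} = j} = (Nat.card α).choose j := by
  classical
  have := Fintype.ofFinite α
  have e : {P : α → Prop // Nat.card {a // P a} = j} ≃ {s : Finset α // s.card = j} :=
    { toFun P := ⟨univ.filter P.1, by
        rw [← Fintype.card_subtype, ← Nat.card_eq_fintype_card, P.2]⟩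
      invFun s := ⟨(· ∈ s.1), (Nat.card_eq_finsetCard s.1).trans s.2⟩
      left_inv P := Subtype.ext <| funext fun a => by simp
      right_inv s := Subtype.ext <| by ext; simp }
  rw [Nat.card_congr e, Nat.card_eq_fintype_card, Fintype.card_finset_len,
    Nat.card_eq_fintype_card]

theorem PowerSeries.coeff_one_add_X_pow {R : Type*} [Semiring R] (k j : ℕ) :
    coeff j ((1 + X : PowerSeries R) ^ k) = (k.choose j : R) := by
  rw [← Polynomial.coe_X, ← Polynomial.coe_one, ← Polynomial.coe_add, ← Polynomial.coe_pow,
    Polynomial.coeff_coe, Polynomial.coeff_one_add_X_pow]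

theorem Polynomial.eq_of_eval_natCast_eq {R : Type*} [CommRing R] [IsDomain R] [CharZero R]
    {p q : Polynomial R} (h : ∀ m : ℕ, p.eval (m : R) = q.eval (m : R)) : p = q :=
  eq_of_infinite_eval_eq p q <| (Set.infinite_range_of_injective Nat.cast_injective).mono <| by
    rintro _ ⟨m, rfl⟩
    exact h m

theorem Finsupp.finrank_supported {α R : Type*} [Ring R] [StrongRankCondition R] (s : Set α)
    [Finite s] : Module.finrank R (supported R R s) = Nat.card s := by
  have := Fintype.ofFinite s
  rw [(supportedEquivFinsupp s).finrank_eq, Module.finrank_finsupp_self, Nat.card_eq_fintype_card]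

namespace OGraph

variable (G : OGraph)

instance (s : Finset (Fin G.n)) : Finite (G.Comp s) := Quot.finite _

section Whitney

variable [DecidableEq G.V]

def monochromatic (m : ℕ) (e : Fin G.n) : Finset (G.V → Fin m) :=
  {c | ∀ u v, G.ends e = s(u, v) → c u = c v}

theorem card_inf_monochromatic (m : ℕ) (s : Finset (Fin G.n)) :
    #(s.inf (G.monochromatic m)) = m ^ G.ncomp s := by
  have e : {c // c ∈ s.inf (G.monochromatic m)} ≃
      {c : G.V → Fin m // ∀ u v, G.rel s u v → c u = c v} :=
    Equiv.subtypeEquivRight fun c => by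
      simp only [mem_inf, monochromatic, mem_filter, mem_univ, true_and, rel]
      exact ⟨fun h u v ⟨e, he, huv⟩ => h e he u v huv,
        fun h e he u v huv => h u v ⟨e, he, huv⟩⟩
  rw [← Nat.card_eq_finsetCard, Nat.card_congr e, Quot.card_fun_compatible, Nat.card_fin]
  rfl

theorem card_inf_compl_monochromatic (m : ℕ) :
    #((univ : Finset (Fin G.n)).inf fun e => (G.monochromatic m e)ᶜ) = G.chromatic m := by
  rw [← Nat.card_eq_finsetCard, chromatic]
  refine Nat.card_congr (Equiv.subtypeEquivRight fun c => ?_)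
  simp only [mem_inf, mem_univ, true_implies, mem_compl, monochromatic, mem_filter, true_and]
  refine ⟨fun h e u v huv hc => h e fun u' v' huv' => ?_, fun h e hmono => ?_⟩
  · rcases Sym2.eq_iff.mp (huv'.symm.trans huv) with ⟨rfl, rfl⟩ | ⟨rfl, rfl⟩
    exacts [hc, hc.symm]
  · induction he : G.ends e using Sym2.ind with
    | _ u v => exact h e u v he (hmono u v he)

end Whitney

theorem chromatic_eq_sum_powerset (m : ℕ) :
    (G.chromatic m : ℤ) =
      ∑ s ∈ (univ : Finset (Fin G.n)).powerset, (-1) ^ #s * (m : ℤ) ^ G.ncomp s := by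
  classical
  simp only [← card_inf_compl_monochromatic, inclusion_exclusion_card_inf_compl,
    card_inf_monochromatic, Nat.cast_pow]

/-- Whitney's expansion of the chromatic polynomial over spanning subgraphs. -/
noncomputable def chromaticPoly : Polynomial ℤ :=
  ∑ s ∈ (univ : Finset (Fin G.n)).powerset, Polynomial.C ((-1) ^ #s) * Polynomial.X ^ G.ncomp s

theorem eval_natCast_chromaticPoly (m : ℕ) : G.chromaticPoly.eval (m : ℤ) = G.chromatic m := by
  simp [chromaticPoly, Polynomial.eval_finsetSum, chromatic_eq_sum_powerset]

theorem eq_chromaticPoly {p : Polynomial ℤ} (hp : ∀ m : ℕ, p.eval (m : ℤ) = G.chromatic m) :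
    p = G.chromaticPoly :=
  Polynomial.eq_of_eval_natCast_eq fun m => by rw [hp, eval_natCast_chromaticPoly]

def bidegreeEquivSigma (i j : ℕ) :
    {S : G.EState | S.1.card = i ∧ G.jdeg S = j} ≃
      Σ s : {s : Finset (Fin G.n) // s.card = i},
        {P : G.Comp s → Prop // Nat.card {k // P k} = j} where
  toFun S := ⟨⟨S.1.1, S.2.1⟩, ⟨S.1.2, S.2.2⟩⟩
  invFun S := ⟨⟨S.1.1, S.2.1⟩, S.1.2, S.2.2⟩

theorem finrank_Cmod (i j : ℕ) :
    Module.finrank ℤ (G.Cmod i j) = ∑ s ∈ powersetCard i univ, (G.ncomp s).choose j := by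
  rw [Cmod, Finsupp.finrank_supported, Nat.card_congr (G.bidegreeEquivSigma i j), Nat.card_sigma]
  simp only [Nat.card_pred_with_card]
  exact (sum_subtype _ (fun _ => mem_powersetCard_univ) fun s => (G.ncomp s).choose j).symm

theorem qdimC_eq_sum (i : ℕ) :
    G.qdimC i = ∑ s ∈ powersetCard i univ, (1 + PowerSeries.X) ^ G.ncomp s := by
  ext j
  simp [qdimC, finrank_Cmod, PowerSeries.coeff_one_add_X_pow]

end OGraph

/-- the graded Euler characteristic of the graph cohomology
complex `C(G)` equals the chromatic polynomial of `G` evaluated at `λ = 1 + q`: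
for any polynomial `p` whose value at every natural number `m` is the number of
proper `m`-colorings of `G` (i.e. `p` is the chromatic polynomial of `G`),
`Σ_i (-1)^i qdim(C^i(G)) = p(1 + q)` as power series in `q`. -/
theorem graded_euler_char_eq_chromatic (G : OGraph) (p : Polynomial ℤ)
    (hp : ∀ m : ℕ, p.eval (m : ℤ) = (G.chromatic m : ℤ)) :
    ∑ i ∈ Finset.range (G.n + 1), (-1 : PowerSeries ℤ) ^ i * G.qdimC i =
      p.eval₂ (PowerSeries.C : ℤ →+* PowerSeries ℤ) (1 + PowerSeries.X) := by
  rw [G.eq_chromaticPoly hp, OGraph.chromaticPoly, Polynomial.eval₂_finsetSum,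
    sum_powerset, card_univ, Fintype.card_fin]
  refine sum_congr rfl fun i _ => ?_
  rw [G.qdimC_eq_sum, mul_sum]
  refine sum_congr rfl fun s hs => ?_
  rw [Polynomial.eval₂_mul, Polynomial.eval₂_C, Polynomial.eval₂_X_pow,
    mem_powersetCard_univ.mp hs, map_pow, map_neg, map_one]
end

section
/- The cohomology groups H^{i,j}(G) of the graph cohomology complex do not depend on the chosen ordering of the edges of G: if G_σ is the same graph with edges relabeled by a permutation σ, then the chain complexes C(G) and C(G_σ) are isomorphic as graded chain complexes. -/
namespace OGraph

/-- The graph `G_σ`: the same graph as `G`, with edges relabeled by the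
permutation `σ` (the edge labeled `k` in `G` is labeled `σ k` in `G_σ`). -/
def permute (G : OGraph) (σ : Equiv.Perm (Fin G.n)) : OGraph :=
  ⟨G.V, G.n, fun k => G.ends (σ⁻¹ k)⟩

end OGraph

namespace OGraph

variable (G : OGraph) (σ : Equiv.Perm (Fin G.n))

theorem rel_permute (s : Finset (Fin G.n)) :
    (G.permute σ).rel (s.image σ) = G.rel s := by
  funext u v
  apply propext
  constructor
  · rintro ⟨e, he, h⟩
    obtain ⟨f, hf, rfl⟩ := Finset.mem_image.mp he
    refine ⟨f, hf, ?_⟩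
    simpa [permute] using h
  · rintro ⟨f, hf, h⟩
    refine ⟨σ f, Finset.mem_image_of_mem _ hf, ?_⟩
    simpa [permute] using h

theorem cast_quot_mk {α : Type} {r r' : α → α → Prop} (hr : r = r')
    (h : Quot r = Quot r') (u : α) : cast h (Quot.mk r u) = Quot.mk r' u := by
  subst hr; rfl

theorem compEq (s : Finset (Fin G.n)) :
    (G.permute σ).Comp (s.image σ) = G.Comp s :=
  congrArg Quot (rel_permute G σ s)

theorem estExt {G' : OGraph} {t t' : Finset (Fin G'.n)} (h : t = t')
    {c : G'.Comp t → Prop} {c' : G'.Comp t' → Prop}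
    (hc : ∀ K, c' (cast (congrArg G'.Comp h) K) = c K) :
    (⟨t, c⟩ : G'.EState) = ⟨t', c'⟩ := by
  subst h
  exact congrArg (Sigma.mk t) (funext fun K => (hc K).symm)

end OGraph
namespace OGraph

variable (G : OGraph) (σ : Equiv.Perm (Fin G.n))

theorem image_inv_image (t : Finset (Fin G.n)) : t = (t.image ⇑σ⁻¹).image σ := by
  rw [Finset.image_image]; ext x; simp

theorem compEq' {t : Finset (Fin G.n)} {s : Finset (Fin G.n)} (h : t = s.image σ) :
    (G.permute σ).Comp t = G.Comp s := by rw [h]; exact compEq G σ s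

/-- The equivalence of enhanced states. -/
noncomputable def estE : G.EState ≃ (G.permute σ).EState where
  toFun S := ⟨S.1.image σ, fun K => S.2 (cast (compEq G σ S.1) K)⟩
  invFun T := ⟨T.1.image ⇑σ⁻¹, fun k =>
    T.2 (cast (compEq' G σ (image_inv_image G σ T.1)).symm k)⟩
  left_inv S := by
    rcases S with ⟨s, c⟩
    dsimp only
    refine estExt (by erw [Finset.image_image]; ext x; simp) (fun K => ?_)
    rw [cast_cast]
  right_inv T := by
    rcases T with ⟨t, c⟩
    dsimp only
    refine estExt (G' := G.permute σ) (c' := c) (image_inv_image G σ t).symm (fun K => ?_)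
    erw [cast_cast]; rfl

end OGraph
namespace OGraph

variable (G : OGraph) (σ : Equiv.Perm (Fin G.n))

/-- The sign `(-1)^{inv_σ(s)}` counting inversions of `σ` inside `s`. -/
def esgn (s : Finset (Fin G.n)) : ℤ :=
  ∏ f ∈ s, ∏ g ∈ s, if g < f ∧ σ f < σ g then (-1 : ℤ) else 1

theorem esgn_mul_self (s : Finset (Fin G.n)) : esgn G σ s * esgn G σ s = 1 := by
  unfold esgn
  rw [← Finset.prod_mul_distrib]
  refine Finset.prod_eq_one fun f _ => ?_
  rw [← Finset.prod_mul_distrib]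
  refine Finset.prod_eq_one fun g _ => ?_
  split <;> norm_num

theorem pow_filter_card (s : Finset (Fin G.n)) (p : Fin G.n → Prop) [DecidablePred p] :
    ((-1 : ℤ)) ^ ((s.filter p).card) = ∏ f ∈ s, if p f then (-1 : ℤ) else 1 := by
  rw [← Finset.prod_filter, Finset.prod_const]

theorem filter_image_card (s : Finset (Fin G.n)) (e : Fin G.n) :
    ((s.image σ).filter (fun f => f < σ e)).card = (s.filter (fun f => σ f < σ e)).card := by
  have h : (s.image σ).filter (fun f => f < σ e) = (s.filter (fun f => σ f < σ e)).image σ := by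
    ext x
    simp only [Finset.mem_filter, Finset.mem_image]
    constructor
    · rintro ⟨⟨f, hf, rfl⟩, hlt⟩; exact ⟨f, ⟨hf, hlt⟩, rfl⟩
    · rintro ⟨f, ⟨hf, hlt⟩, rfl⟩; exact ⟨⟨f, hf, rfl⟩, hlt⟩
  rw [h, Finset.card_image_of_injective _ σ.injective]

theorem esgn_insert {s : Finset (Fin G.n)} {e : Fin G.n} (he : e ∉ s) :
    esgn G σ (insert e s) = esgn G σ s *
      (∏ g ∈ s, if g < e ∧ σ e < σ g then (-1 : ℤ) else 1) *
      (∏ f ∈ s, if e < f ∧ σ f < σ e then (-1 : ℤ) else 1) := by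
  unfold esgn
  rw [Finset.prod_insert he]
  rw [Finset.prod_insert he]
  have h1 : (if e < e ∧ σ e < σ e then (-1 : ℤ) else 1) = 1 := by simp
  rw [h1, one_mul]
  have h2 : ∀ f ∈ s, (∏ g ∈ insert e s, if g < f ∧ σ f < σ g then (-1 : ℤ) else 1)
      = (if e < f ∧ σ f < σ e then (-1 : ℤ) else 1) *
        ∏ g ∈ s, if g < f ∧ σ f < σ g then (-1 : ℤ) else 1 := by
    intro f _
    rw [Finset.prod_insert he]
  rw [Finset.prod_congr rfl h2, Finset.prod_mul_distrib]
  ring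

theorem esgn_sign_identity {s : Finset (Fin G.n)} {e : Fin G.n} (he : e ∉ s) :
    esgn G σ s * (-1 : ℤ) ^ ((s.filter (fun f => σ f < σ e)).card) =
      (-1 : ℤ) ^ ((s.filter (fun f => f < e)).card) * esgn G σ (insert e s) := by
  rw [esgn_insert G σ he, pow_filter_card, pow_filter_card]
  have key : (∏ f ∈ s, if σ f < σ e then (-1 : ℤ) else 1) =
      ∏ f ∈ s, ((if f < e then (-1 : ℤ) else 1) *
        (if f < e ∧ σ e < σ f then (-1 : ℤ) else 1) *
        (if e < f ∧ σ f < σ e then (-1 : ℤ) else 1)) := by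
    refine Finset.prod_congr rfl fun f hf => ?_
    have hne : f ≠ e := fun h => he (h ▸ hf)
    have hσne : σ f ≠ σ e := fun h => hne (σ.injective h)
    rcases hne.lt_or_gt with h | h <;> rcases hσne.lt_or_gt with h' | h' <;>
      simp [h, h', asymm h, asymm h']
  rw [key, Finset.prod_mul_distrib, Finset.prod_mul_distrib]
  ring

end OGraph
namespace OGraph

variable (G : OGraph) (σ : Equiv.Perm (Fin G.n))

/-- The diagonal sign map. -/
noncomputable def signL : (G.EState →₀ ℤ) →ₗ[ℤ] (G.EState →₀ ℤ) :=
  Finsupp.lsum ℤ fun S => LinearMap.toSpanSingleton ℤ _ (esgn G σ S.1 • Finsupp.single S 1)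

theorem signL_single (S : G.EState) (a : ℤ) :
    signL G σ (Finsupp.single S a) = (a * esgn G σ S.1) • Finsupp.single S 1 := by
  rw [signL, Finsupp.lsum_single, LinearMap.toSpanSingleton_apply, smul_smul]

theorem signL_apply (x : G.EState →₀ ℤ) (T : G.EState) :
    signL G σ x T = esgn G σ T.1 * x T := by
  classical
  rw [signL, Finsupp.lsum_apply, Finsupp.sum_apply]
  rw [Finsupp.sum]
  have : ∀ S ∈ x.support,
      (LinearMap.toSpanSingleton ℤ (G.EState →₀ ℤ) (esgn G σ S.1 • Finsupp.single S 1) (x S)) T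
        = if S = T then esgn G σ T.1 * x T else 0 := by
    intro S _
    rw [LinearMap.toSpanSingleton_apply, smul_smul, Finsupp.smul_apply, Finsupp.single_apply]
    split
    · next h => subst h; simp [mul_comm]
    · simp
  rw [Finset.sum_congr rfl this, Finset.sum_ite_eq']
  split
  · rfl
  · next h => rw [Finsupp.notMem_support_iff.mp h, mul_zero]

theorem signL_signL : (signL G σ).comp (signL G σ) = LinearMap.id := by
  refine Finsupp.lhom_ext fun S a => ?_
  simp only [LinearMap.comp_apply, LinearMap.id_apply]
  rw [signL_single, map_smul, signL_single, one_mul, smul_smul]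
  rw [mul_comm a, mul_assoc, mul_comm a, ← mul_assoc, esgn_mul_self, one_mul]
  rw [Finsupp.smul_single', mul_one]

/-- The sign part, as a linear equivalence. -/
noncomputable def signE : (G.EState →₀ ℤ) ≃ₗ[ℤ] (G.EState →₀ ℤ) :=
  LinearEquiv.ofLinear (signL G σ) (signL G σ) (signL_signL G σ) (signL_signL G σ)

/-- The full chain isomorphism. -/
noncomputable def Fequiv : (G.EState →₀ ℤ) ≃ₗ[ℤ] ((G.permute σ).EState →₀ ℤ) :=
  (signE G σ).trans (Finsupp.domLCongr (estE G σ))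

theorem Fequiv_single (S : G.EState) :
    Fequiv G σ (Finsupp.single S 1) =
      esgn G σ S.1 • Finsupp.single (estE G σ S) 1 := by
  rw [Fequiv, LinearEquiv.trans_apply]
  show Finsupp.domLCongr (estE G σ) (signL G σ (Finsupp.single S 1)) = _
  rw [signL_single, one_mul, map_smul, Finsupp.domLCongr_single]

end OGraph
namespace OGraph

variable (G : OGraph) (σ : Equiv.Perm (Fin G.n))

theorem jdeg_estE (S : G.EState) :
    (G.permute σ).jdeg (estE G σ S) = G.jdeg S := by
  unfold jdeg
  exact Nat.card_congr (Equiv.subtypeEquiv (Equiv.cast (compEq G σ S.1)) fun K => Iff.rfl)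

theorem card_estE (S : G.EState) :
    (estE G σ S).1.card = S.1.card := by
  show (S.1.image σ).card = S.1.card
  exact Finset.card_image_of_injective _ σ.injective

theorem estE_image (i j : ℕ) :
    (estE G σ) '' {S : G.EState | S.1.card = i ∧ G.jdeg S = j} =
      {T : (G.permute σ).EState | T.1.card = i ∧ (G.permute σ).jdeg T = j} := by
  ext T
  simp only [Set.mem_image, Set.mem_setOf_eq]
  constructor
  · rintro ⟨S, hS, rfl⟩
    rw [card_estE, jdeg_estE]
    exact hS
  · intro h
    refine ⟨(estE G σ).symm T, ?_, (estE G σ).apply_symm_apply T⟩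
    rw [← card_estE G σ ((estE G σ).symm T), ← jdeg_estE G σ ((estE G σ).symm T),
      (estE G σ).apply_symm_apply]
    exact h

theorem map_signL_Cmod (i j : ℕ) :
    Submodule.map (signL G σ) (G.Cmod i j) = G.Cmod i j := by
  have hmem : ∀ x : G.EState →₀ ℤ, x ∈ G.Cmod i j → signL G σ x ∈ G.Cmod i j := by
    intro x hx
    rw [Cmod, Finsupp.mem_supported'] at hx ⊢
    intro T hT
    rw [signL_apply, hx T hT, mul_zero]
  apply le_antisymm
  · rintro _ ⟨x, hx, rfl⟩
    exact hmem x hx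
  · intro x hx
    refine ⟨signL G σ x, hmem x hx, ?_⟩
    have := LinearMap.ext_iff.mp (signL_signL G σ) x
    simpa using this

theorem domLCongr_eq_lmapDomain :
    ((Finsupp.domLCongr (estE G σ) :
        (G.EState →₀ ℤ) ≃ₗ[ℤ] ((G.permute σ).EState →₀ ℤ)) :
      (G.EState →₀ ℤ) →ₗ[ℤ] ((G.permute σ).EState →₀ ℤ)) =
      Finsupp.lmapDomain ℤ ℤ (estE G σ) := by
  refine Finsupp.lhom_ext fun S a => ?_
  rw [LinearEquiv.coe_coe, Finsupp.domLCongr_single, Finsupp.lmapDomain_apply,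
    Finsupp.mapDomain_single]

theorem map_Fequiv_Cmod (i j : ℕ) :
    Submodule.map (Fequiv G σ : (G.EState →₀ ℤ) →ₗ[ℤ] ((G.permute σ).EState →₀ ℤ))
      (G.Cmod i j) = (G.permute σ).Cmod i j := by
  have : (Fequiv G σ : (G.EState →₀ ℤ) →ₗ[ℤ] ((G.permute σ).EState →₀ ℤ)) =
      (Finsupp.lmapDomain ℤ ℤ (estE G σ)).comp (signL G σ) := by
    rw [← domLCongr_eq_lmapDomain]
    rfl
  rw [this, Submodule.map_comp, map_signL_Cmod, Cmod, Finsupp.lmapDomain_supported,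
    estE_image, Cmod]

end OGraph
namespace OGraph

/-- The canonical map of components induced by inserting an edge. -/
def pmap (G : OGraph) (s : Finset (Fin G.n)) (e : Fin G.n) :
    G.Comp s → G.Comp (insert e s) :=
  qmap fun _ _ huv => huv.elim fun f hf => ⟨f, Finset.mem_insert_of_mem hf.1, hf.2⟩

theorem addEdge_of_mem (G : OGraph) (S : G.EState) (e : Fin G.n) (he : e ∈ S.1) :
    G.addEdge S e = 0 := by
  rw [addEdge, if_pos he]

open Classical in
theorem addEdge_eq (G : OGraph) (s : Finset (Fin G.n)) (c : G.Comp s → Prop)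
    (e : Fin G.n) (he : e ∉ s) :
    G.addEdge ⟨s, c⟩ e =
      if ∃ k1 k2 : G.Comp s, k1 ≠ k2 ∧ pmap G s e k1 = pmap G s e k2 ∧ c k1 ∧ c k2
      then 0
      else Finsupp.single ⟨insert e s, fun K => ∃ k, pmap G s e k = K ∧ c k⟩ 1 := by
  rw [addEdge, if_neg he]
  rfl

variable (G : OGraph) (σ : Equiv.Perm (Fin G.n))

theorem addEdge_estE (S : G.EState) (e : Fin G.n) :
    (G.permute σ).addEdge (estE G σ S) (σ e) =
      Finsupp.lmapDomain ℤ ℤ (⇑(estE G σ)) (G.addEdge S e) := by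
  classical
  obtain ⟨s, c⟩ := S
  by_cases he : e ∈ s
  · rw [addEdge_of_mem G ⟨s, c⟩ e he,
      addEdge_of_mem (G.permute σ) _ (σ e) (Finset.mem_image_of_mem σ he), map_zero]
  · have he' : σ e ∉ s.image ⇑σ := by
      simp [Finset.mem_image, σ.injective.eq_iff, he]
    have hins : insert (σ e) (s.image ⇑σ) = (insert e s).image ⇑σ :=
      (Finset.image_insert _ _ _).symm
    have hr1 : (G.permute σ).rel (s.image σ) = G.rel s := rel_permute G σ s
    have hr2 : (G.permute σ).rel (insert (σ e) (s.image ⇑σ)) = G.rel (insert e s) := by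
      erw [hins]; exact rel_permute G σ (insert e s)
    have h1 : (G.permute σ).Comp (s.image σ) = G.Comp s := congrArg Quot hr1
    have h2 : (G.permute σ).Comp (insert (σ e) (s.image ⇑σ)) = G.Comp (insert e s) :=
      congrArg Quot hr2
    set c1 : (G.permute σ).Comp (s.image σ) ≃ G.Comp s := Equiv.cast h1 with hc1
    set c2 : (G.permute σ).Comp (insert (σ e) (s.image ⇑σ)) ≃ G.Comp (insert e s) :=
      Equiv.cast h2 with hc2
    have hp : ∀ k, c2 (pmap (G.permute σ) (s.image σ) (σ e) k) = G.pmap s e (c1 k) := by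
      refine Quot.ind (fun u => ?_)
      have e1 : c1 (Quot.mk _ u) = Quot.mk _ u := cast_quot_mk hr1 h1 u
      have e2 : c2 (pmap (G.permute σ) (s.image σ) (σ e) (Quot.mk _ u)) = Quot.mk _ u :=
        cast_quot_mk hr2 h2 u
      rw [e2, e1]
      rfl
    have hest : estE G σ ⟨s, c⟩ =
        ⟨s.image ⇑σ, fun K => c (cast h1 K)⟩ := rfl
    have hmergeiff :
        (∃ k1 k2 : (G.permute σ).Comp (s.image ⇑σ), k1 ≠ k2 ∧
          pmap (G.permute σ) (s.image ⇑σ) (σ e) k1 =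
            pmap (G.permute σ) (s.image ⇑σ) (σ e) k2 ∧
          c (cast h1 k1) ∧ c (cast h1 k2)) ↔
        (∃ k1 k2 : G.Comp s, k1 ≠ k2 ∧ G.pmap s e k1 = G.pmap s e k2 ∧ c k1 ∧ c k2) := by
      constructor
      · rintro ⟨k1, k2, hne, hpp, hx1, hx2⟩
        refine ⟨c1 k1, c1 k2, fun h => hne (c1.injective h), ?_, hx1, hx2⟩
        rw [← hp, ← hp, hpp]
      · rintro ⟨k1, k2, hne, hpp, hx1, hx2⟩
        refine ⟨c1.symm k1, c1.symm k2, fun h => hne ?_, c2.injective ?_, ?_, ?_⟩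
        · have := congrArg c1 h
          simpa using this
        · rw [hp, hp, c1.apply_symm_apply, c1.apply_symm_apply, hpp]
        · show c (c1 (c1.symm k1))
          rw [c1.apply_symm_apply]; exact hx1
        · show c (c1 (c1.symm k2))
          rw [c1.apply_symm_apply]; exact hx2
    rw [hest, addEdge_eq G s c e he,
      addEdge_eq (G.permute σ) (s.image ⇑σ) (fun K => c (cast h1 K)) (σ e) he']
    by_cases hm : ∃ k1 k2 : G.Comp s, k1 ≠ k2 ∧ G.pmap s e k1 = G.pmap s e k2 ∧ c k1 ∧ c k2
    · rw [if_pos hm, if_pos (hmergeiff.mpr hm), map_zero]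
    · rw [if_neg hm, if_neg (fun h => hm (hmergeiff.mp h)), Finsupp.lmapDomain_apply,
        Finsupp.mapDomain_single]
      congr 1
      refine estExt (G' := G.permute σ) hins (fun K => ?_)
      show (∃ k, G.pmap s e k = cast (compEq G σ (insert e s))
          (cast (congrArg (G.permute σ).Comp hins) K) ∧ c k) =
        (∃ k', pmap (G.permute σ) (s.image σ) (σ e) k' = K ∧ c (cast h1 k'))
      rw [cast_cast]
      apply propext
      constructor
      · rintro ⟨k, hk, hck⟩
        refine ⟨c1.symm k, c2.injective ?_, ?_⟩
        · rw [hp, c1.apply_symm_apply, hk]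
          rfl
        · show c (c1 (c1.symm k))
          rw [c1.apply_symm_apply]; exact hck
      · rintro ⟨k', hk', hck'⟩
        refine ⟨c1 k', ?_, hck'⟩
        rw [← hp, hk']
        rfl

end OGraph
namespace OGraph

theorem diff_single (G : OGraph) (S : G.EState) :
    G.diff (Finsupp.single S 1) = G.dState S := by
  rw [diff, Finsupp.lsum_single, LinearMap.toSpanSingleton_apply, one_smul]

variable (G : OGraph) (σ : Equiv.Perm (Fin G.n))

theorem key_e (S : G.EState) (e : Fin G.n) :
    esgn G σ S.1 • ((-1 : ℤ) ^ (((S.1.image ⇑σ).filter (fun f => f < σ e)).card)) •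
        (G.permute σ).addEdge (estE G σ S) (σ e) =
      ((-1 : ℤ) ^ ((S.1.filter (fun f => f < e)).card)) •
        Fequiv G σ (G.addEdge S e) := by
  rw [filter_image_card, addEdge_estE]
  by_cases he : e ∈ S.1
  · rw [addEdge_of_mem G S e he]
    simp
  · obtain ⟨s, c⟩ := S
    classical
    rw [addEdge_eq G s c e he]
    by_cases hm : ∃ k1 k2 : G.Comp s, k1 ≠ k2 ∧ G.pmap s e k1 = G.pmap s e k2 ∧ c k1 ∧ c k2
    · rw [if_pos hm]
      simp
    · rw [if_neg hm, Finsupp.lmapDomain_apply, Finsupp.mapDomain_single, Fequiv_single,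
        smul_smul, smul_smul]
      dsimp only
      congr 1
      exact esgn_sign_identity G σ he
  
theorem diff_comm_single (S : G.EState) :
    (G.permute σ).diff (Fequiv G σ (Finsupp.single S 1)) =
      Fequiv G σ (G.diff (Finsupp.single S 1)) := by
  rw [Fequiv_single, map_smul, diff_single, diff_single]
  have hd : (G.permute σ).dState (estE G σ S) =
      ∑ e : Fin G.n, ((-1 : ℤ) ^ (((S.1.image ⇑σ).filter (fun f => f < σ e)).card)) •
        (G.permute σ).addEdge (estE G σ S) (σ e) := by
    rw [dState]
    exact (Equiv.sum_comp σ fun e' => ((-1 : ℤ) ^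
      (((estE G σ S).1.filter (fun f => f < e')).card)) •
        (G.permute σ).addEdge (estE G σ S) e').symm
  rw [hd, dState, map_sum, Finset.smul_sum]
  refine Finset.sum_congr rfl fun e _ => ?_
  rw [map_smul]
  exact key_e G σ S e

end OGraph

/-- the graph cohomology chain complex does not depend on the
ordering of the edges: for any permutation `σ` of the edge labels, there is a
`ℤ`-linear isomorphism between the chain complexes `C(G)` and `C(G_σ)` commuting
with the differentials and preserving the bigrading (hence the cohomology groups
`H^{i,j}` are isomorphic). -/
theorem chain_complex_independent_of_ordering (G : OGraph) (σ : Equiv.Perm (Fin G.n)) :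
    ∃ f : (G.EState →₀ ℤ) ≃ₗ[ℤ] ((G.permute σ).EState →₀ ℤ),
      ((G.permute σ).diff.comp (f : (G.EState →₀ ℤ) →ₗ[ℤ] ((G.permute σ).EState →₀ ℤ)) =
        (f : (G.EState →₀ ℤ) →ₗ[ℤ] ((G.permute σ).EState →₀ ℤ)).comp G.diff) ∧
      ∀ i j : ℕ, Submodule.map
          (f : (G.EState →₀ ℤ) →ₗ[ℤ] ((G.permute σ).EState →₀ ℤ)) (G.Cmod i j) =
        (G.permute σ).Cmod i j := by

  refine ⟨OGraph.Fequiv G σ, ?_, OGraph.map_Fequiv_Cmod G σ⟩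
  refine Finsupp.lhom_ext' fun S => ?_
  refine LinearMap.ext_ring ?_
  simp only [LinearMap.comp_apply, Finsupp.lsingle_apply, LinearEquiv.coe_coe]
  exact OGraph.diff_comm_single G σ S
end
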